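/- For every α with 0 < α < 1 and every σ with 1/e < σ < 1 − 1/e, the Prelec weights of the complementary probabilities sum to less than one: w_α(σ) + w_α(1 − σ) < 1. -/

import Mathlib

/-- The Prelec probability weighting function `w_α(σ) = exp(−(−ln σ)^α)`. -/
noncomputable def prelec (α σ : ℝ) : ℝ := Real.exp (-((-Real.log σ) ^ α))

open Real

theorem prelec_lt_self {α σ : ℝ} (hα : α < 1) (hσ₀ : 1 / exp 1 < σ) (hσ₁ : σ < 1) :
    prelec α σ < σ := by
  have hσ : 0 < σ := (by positivity : (0 : ℝ) < 1 / exp 1).trans hσ₀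
  set t := -log σ with ht
  have ht₀ : 0 < t := neg_pos.mpr (log_neg hσ hσ₁)
  have ht₁ : t < 1 := by
    have := log_lt_log (by positivity) hσ₀
    rw [one_div, log_inv, log_exp] at this
    linarith
  calc prelec α σ = exp (-t ^ α) := rfl
    _ < exp (-t) := by
      refine exp_lt_exp.mpr (neg_lt_neg ?_)
      simpa using rpow_lt_rpow_of_exponent_gt ht₀ ht₁ hα
    _ = σ := by rw [ht, neg_neg, exp_log hσ]

theorem prelec_subcertainty_general (α σ : ℝ) (hα1 : α < 1)
    (hσl : 1 / Real.exp 1 < σ) (hσr : σ < 1 - 1 / Real.exp 1) :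
    prelec α σ + prelec α (1 - σ) < 1 := by
  have he : 0 < 1 / exp 1 := by positivity
  have hσ := prelec_lt_self hα1 hσl (by linarith)
  have hσ' := prelec_lt_self (σ := 1 - σ) hα1 (by linarith) (by linarith)
  linarith

/-- For every `0 < α < 1` and every `σ ∈ (1/e, 1 − 1/e)`, the Prelec
weights of the complementary probabilities sum to less than one:
`w_α(σ) + w_α(1 − σ) < 1`. -/
theorem prelec_subcertainty (α σ : ℝ) (hα : 0 < α) (hα1 : α < 1)
    (hσl : 1 / Real.exp 1 < σ) (hσr : σ < 1 - 1 / Real.exp 1) :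
    prelec α σ + prelec α (1 - σ) < 1 :=
  prelec_subcertainty_general α σ hα1 hσl hσr
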